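/- Let d be a prime, F = ℤ/dℤ, ω = exp(2πi/d), and for g ∈ F^n let X^g and Z^g be the linear operators on ℂ^{F^n} determined by X^g e_a = e_{a−g} and Z^g e_a = ω^{g·a} e_a. Let C ⊆ F^n be a self-orthogonal linear subspace and define φ_{x,z,v} = |C|^{−1/2}·Σ_{w∈C} ω^{z·w} e_{w+v+x} for x, z ∈ F^n and v ∈ C^⊥. Then for every g ∈ C: Z^g φ_{x,z,v} = ω^{x·g}·φ_{x,z,v} and X^g φ_{x,z,v} = ω^{z·g}·φ_{x,z,v}. -/

import Mathlib

/- STATEMENT 16 (eigenvector relations (6) for the CSS states): for g ∈ C,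
   Z^g φ_{x,z,v} = ω^{x·g} φ_{x,z,v} and X^g φ_{x,z,v} = ω^{z·g} φ_{x,z,v}. -/

open scoped BigOperators

noncomputable section

/-- Dot product `x·y = Σᵢ xᵢ yᵢ` in `ℤ/dℤ`. -/
def dotp {d n : ℕ} (x y : Fin n → ZMod d) : ZMod d := ∑ i, x i * y i

/-- `C^⊥ = {y : ∀ x ∈ C, x·y = 0}`. -/
def dualSet {d n : ℕ} (C : Set (Fin n → ZMod d)) : Set (Fin n → ZMod d) :=
  {y | ∀ x ∈ C, dotp x y = 0}

/-- `ω = exp(2πi/d)`. -/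
def omg (d : ℕ) : ℂ := Complex.exp (2 * Real.pi * Complex.I / d)

/-- The standard basis vector `e_c` of `ℂ^{Fⁿ}`. -/
def stdv {d n : ℕ} (c : Fin n → ZMod d) : (Fin n → ZMod d) → ℂ :=
  fun a => if a = c then 1 else 0

/-- The CSS basis state `φ_{x,z,v} = |C|^{−1/2}·Σ_{w∈C} ω^{z·w} e_{w+v+x}`. -/
def phiv {d n : ℕ} (C : Submodule (ZMod d) (Fin n → ZMod d))
    (x z v : Fin n → ZMod d) : (Fin n → ZMod d) → ℂ :=
  fun a => (1 / (Real.sqrt (Nat.card C) : ℂ)) *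
    ∑ᶠ w ∈ (C : Set (Fin n → ZMod d)), omg d ^ (dotp z w).val * stdv (w + v + x) a

/-- The operator `X^g` on `ℂ^{Fⁿ}`, determined by `X^g e_a = e_{a−g}`:
`(X^g f)(b) = f(b+g)`. -/
def Xop {d n : ℕ} (g : Fin n → ZMod d) (f : (Fin n → ZMod d) → ℂ) : (Fin n → ZMod d) → ℂ :=
  fun b => f (b + g)

/-- The operator `Z^g` on `ℂ^{Fⁿ}`, determined by `Z^g e_a = ω^{g·a} e_a`. -/
def Zop {d n : ℕ} (g : Fin n → ZMod d) (f : (Fin n → ZMod d) → ℂ) : (Fin n → ZMod d) → ℂ :=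
  fun b => omg d ^ (dotp g b).val * f b


lemma omg_pow_d {d : ℕ} (hd : d ≠ 0) : omg d ^ d = 1 := by
  unfold omg
  rw [← Complex.exp_nat_mul]
  have hdc : (d : ℂ) ≠ 0 := Nat.cast_ne_zero.mpr hd
  have h : (d : ℂ) * (2 * Real.pi * Complex.I / d) = 2 * Real.pi * Complex.I := by
    field_simp
  rw [h, Complex.exp_two_pi_mul_I]

lemma omg_val_add {d : ℕ} [NeZero d] (a b : ZMod d) :
    omg d ^ (a + b).val = omg d ^ a.val * omg d ^ b.val := by
  rw [ZMod.val_add, ← pow_add]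
  exact (pow_eq_pow_mod _ (omg_pow_d (NeZero.ne d))).symm

lemma dotp_comm {d n : ℕ} (x y : Fin n → ZMod d) : dotp x y = dotp y x := by
  simp [dotp, mul_comm]

lemma dotp_add_right {d n : ℕ} (x y z : Fin n → ZMod d) :
    dotp x (y + z) = dotp x y + dotp x z := by
  simp [dotp, mul_add, Finset.sum_add_distrib]

theorem stmt_16 (d : ℕ) [NeZero d] (hd : d.Prime) (n : ℕ)
    (C : Submodule (ZMod d) (Fin n → ZMod d))
    (hC : (C : Set (Fin n → ZMod d)) ⊆ dualSet (C : Set (Fin n → ZMod d)))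
    (x z v : Fin n → ZMod d) (hv : v ∈ dualSet (C : Set (Fin n → ZMod d)))
    (g : Fin n → ZMod d) (hg : g ∈ C) :
    Zop g (phiv C x z v) = omg d ^ (dotp x g).val • phiv C x z v ∧
    Xop g (phiv C x z v) = omg d ^ (dotp z g).val • phiv C x z v := by
  classical
  have hfin : (C : Set (Fin n → ZMod d)).Finite := Set.toFinite _
  have hsum : ∀ f : (Fin n → ZMod d) → ℂ,
      ∑ᶠ w ∈ (C : Set (Fin n → ZMod d)), f w = ∑ w ∈ hfin.toFinset, f w := by
    intro f
    rw [← finsum_mem_coe_finset, hfin.coe_toFinset]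
  constructor
  · funext b
    simp only [Zop, phiv, Pi.smul_apply, smul_eq_mul]
    have hS : ∑ w ∈ hfin.toFinset,
        omg d ^ (dotp g b).val * (omg d ^ (dotp z w).val * stdv (w + v + x) b) =
        ∑ w ∈ hfin.toFinset,
        omg d ^ (dotp x g).val * (omg d ^ (dotp z w).val * stdv (w + v + x) b) := by
      apply Finset.sum_congr rfl
      intro w hw
      have hwC : w ∈ C := hfin.mem_toFinset.mp hw
      by_cases hb : b = w + v + x
      · subst hb
        have h1 : dotp g w = 0 := hC hwC g hg
        have h2 : dotp g v = 0 := hv g hg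
        have h3 : dotp g (w + v + x) = dotp x g := by
          rw [dotp_add_right, dotp_add_right, h1, h2, dotp_comm]
          ring
        rw [h3]
      · simp [stdv, hb]
    rw [hsum, mul_left_comm, Finset.mul_sum, hS, ← Finset.mul_sum]
    ring
  · funext b
    simp only [Xop, phiv, Pi.smul_apply, smul_eq_mul]
    have hS : ∑ w ∈ hfin.toFinset,
        omg d ^ (dotp z w).val * stdv (w + v + x) (b + g) =
        ∑ w ∈ hfin.toFinset,
        omg d ^ (dotp z g).val * (omg d ^ (dotp z w).val * stdv (w + v + x) b) := by
      refine Finset.sum_nbij' (fun w => w - g) (fun w => w + g) ?_ ?_ ?_ ?_ ?_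
      · intro a ha
        rw [hfin.mem_toFinset] at ha ⊢
        exact C.sub_mem ha hg
      · intro a ha
        rw [hfin.mem_toFinset] at ha ⊢
        exact C.add_mem ha hg
      · intro a _; ring
      · intro a _; ring
      · intro w hw
        have h1 : dotp z w = dotp z (w - g) + dotp z g := by
          have h := dotp_add_right z (w - g) g
          rw [sub_add_cancel] at h
          exact h
        have h2 : stdv (w + v + x) (b + g) = stdv (w - g + v + x) b := by
          simp only [stdv]
          congr 1
          simp only [eq_iff_iff]
          constructor
          · intro h
            have hb : b = w + v + x - g := by rw [← h]; abel
            rw [hb]; abel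
          · intro h
            rw [h]; abel
        rw [h1, omg_val_add, h2]
        ring
    rw [hsum, hsum, hS, ← Finset.mul_sum]
    ring

end
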